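/- In the canonical left-heavy ordered form τ of a rooted multitree T, for every vertex v the subsequences δ(τ_v) and M(τ_v) of the subtree rooted at v occur as contiguous subsequences of δ(τ) and M(τ) respectively, and τ_v is itself a left-heavy (canonical) ordered tree for T_v. -/

import Mathlib

/-!
The two infix claims hold for every subtree, canonical or not: the δ- and M-sequences of a child's
subtree form a contiguous block of those of its parent, with the depths in δ shifted by one.

Canonicity passes from a node to each child `u` by an exchange argument. If a reordering `u'` of `u`
had a larger signature, putting `u'` in place of `u` would give a reordering of the parent whose
δ- and M-sequences agree with the old ones outside the block of `u`, a block whose length does not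
change under reordering; so the parent's signature would increase lexicographically as well.
-/

inductive OTree (S : Type) : Type where
  | node : S → List (ℕ × OTree S) → OTree S

namespace OTree

variable {S : Type}

mutual
  def delta : OTree S → ℕ → List (S × ℕ)
    | .node c l, d => (c, d) :: deltaList l d
  def deltaList : List (ℕ × OTree S) → ℕ → List (S × ℕ)
    | [], _ => []
    | (_, t) :: rest, d => delta t (d + 1) ++ deltaList rest d
end

mutual
  def mseq : OTree S → List ℕ
    | .node _ l => mseqList l
  def mseqList : List (ℕ × OTree S) → List ℕ
    | [] => []
    | (m, t) :: rest => (m :: mseq t) ++ mseqList rest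
end

inductive RIso : OTree S → OTree S → Prop where
  | node (c : S) (l l' : List (ℕ × OTree S))
      (e : Fin l.length ≃ Fin l'.length)
      (h1 : ∀ i : Fin l.length, (l.get i).1 = (l'.get (e i)).1)
      (h2 : ∀ i : Fin l.length, RIso (l.get i).2 (l'.get (e i)).2) :
      RIso (.node c l) (.node c l')

inductive IsSubtree : OTree S → OTree S → Prop where
  | refl (t : OTree S) : IsSubtree t t
  | child {t u : OTree S} {c : S} {l : List (ℕ × OTree S)} {m : ℕ} :
      (m, u) ∈ l → IsSubtree t u → IsSubtree t (.node c l)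

def deltaLt [LinearOrder S] (a b : List (S × ℕ)) : Prop :=
  List.Lex (Prod.Lex (· < ·) (· < ·)) a b

def sigLt [LinearOrder S] (a b : List (S × ℕ) × List ℕ) : Prop :=
  deltaLt a.1 b.1 ∨ (a.1 = b.1 ∧ List.Lex (· < ·) a.2 b.2)

def sigLe [LinearOrder S] (a b : List (S × ℕ) × List ℕ) : Prop :=
  a = b ∨ sigLt a b

def sigOf (t : OTree S) : List (S × ℕ) × List ℕ := (t.delta 0, t.mseq)

def IsCanonical [LinearOrder S] (τ : OTree S) : Prop :=
  ∀ τ', RIso τ' τ → sigLe (sigOf τ') (sigOf τ)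

def IsSignature [LinearOrder S] (T : OTree S) (s : List (S × ℕ) × List ℕ) : Prop :=
  (∃ τ, RIso τ T ∧ sigOf τ = s) ∧ ∀ τ, RIso τ T → sigLe (sigOf τ) s

def shiftk (k : ℕ) (l : List (S × ℕ)) : List (S × ℕ) := l.map fun p => (p.1, p.2 + k)

end OTree

theorem List.Lex.map {α β : Type*} {r : α → α → Prop} {s : β → β → Prop} {f : α → β}
    (hf : ∀ x y, r x y → s (f x) (f y)) {l₁ l₂ : List α} (h : List.Lex r l₁ l₂) :
    List.Lex s (l₁.map f) (l₂.map f) := by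
  induction h with
  | nil => exact .nil
  | cons _ ih => exact .cons ih
  | rel h => exact .rel (hf _ _ h)

theorem List.Lex.append_of_length_eq {α : Type*} {r : α → α → Prop} :
    ∀ {l₁ l₂ : List α}, l₁.length = l₂.length → List.Lex r l₁ l₂ →
      ∀ t₁ t₂, List.Lex r (l₁ ++ t₁) (l₂ ++ t₂)
  | [], [], _, h, _, _ => nomatch h
  | _ :: _, _ :: _, _, .rel h, _, _ => .rel h
  | _ :: _, _ :: _, hl, .cons h, t₁, t₂ =>
    .cons (append_of_length_eq (Nat.succ.inj hl) h t₁ t₂)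

namespace OTree

variable {S : Type}

mutual
  theorem delta_add : ∀ (t : OTree S) (d k : ℕ), t.delta (d + k) = shiftk k (t.delta d)
    | .node c l, d, k => by
      rw [delta, delta, deltaList_add l d k]
      rfl
  theorem deltaList_add : ∀ (l : List (ℕ × OTree S)) (d k : ℕ),
      deltaList l (d + k) = shiftk k (deltaList l d)
    | [], _, _ => rfl
    | (_, t) :: rest, d, k => by
      rw [deltaList, deltaList, Nat.add_right_comm, delta_add t (d + 1) k,
        deltaList_add rest d k, shiftk, shiftk, shiftk, List.map_append]
end

theorem delta_eq_shiftk (t : OTree S) (d : ℕ) : t.delta d = shiftk d (t.delta 0) := by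
  simpa using delta_add t 0 d

theorem deltaList_append (l₁ l₂ : List (ℕ × OTree S)) (d : ℕ) :
    deltaList (l₁ ++ l₂) d = deltaList l₁ d ++ deltaList l₂ d := by
  induction l₁ with
  | nil => rfl
  | cons _ _ ih => simp [deltaList, ih]

theorem mseqList_append (l₁ l₂ : List (ℕ × OTree S)) :
    mseqList (l₁ ++ l₂) = mseqList l₁ ++ mseqList l₂ := by
  induction l₁ with
  | nil => rfl
  | cons _ _ ih => simp [mseqList, ih]

theorem mseqList_eq_flatten (l : List (ℕ × OTree S)) :
    mseqList l = (l.map fun p => p.1 :: p.2.mseq).flatten := by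
  induction l with
  | nil => rfl
  | cons _ _ ih => simp [mseqList, ih]

mutual
  theorem length_delta : ∀ (t : OTree S) (d : ℕ), (t.delta d).length = t.mseq.length + 1
    | .node c l, d => by rw [delta, mseq, List.length_cons, length_deltaList l d]
  theorem length_deltaList : ∀ (l : List (ℕ × OTree S)) (d : ℕ),
      (deltaList l d).length = (mseqList l).length
    | [], _ => rfl
    | (_, t) :: rest, d => by
      rw [deltaList, mseqList, List.length_append, List.length_append, length_delta t,
        length_deltaList rest d, List.length_cons]
end

theorem delta_node_append_cons (c : S) (l₁ l₂ : List (ℕ × OTree S)) (m : ℕ) (u : OTree S)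
    (d : ℕ) : (node c (l₁ ++ (m, u) :: l₂)).delta d =
      (c, d) :: (deltaList l₁ d ++ (u.delta (d + 1) ++ deltaList l₂ d)) := by
  rw [delta, deltaList_append, deltaList]

theorem mseq_node_append_cons (c : S) (l₁ l₂ : List (ℕ × OTree S)) (m : ℕ) (u : OTree S) :
    (node c (l₁ ++ (m, u) :: l₂)).mseq = mseqList l₁ ++ ((m :: u.mseq) ++ mseqList l₂) := by
  rw [mseq, mseqList_append, mseqList]

theorem delta_infix_of_mem {c : S} {l : List (ℕ × OTree S)} {m : ℕ} {u : OTree S}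
    (h : (m, u) ∈ l) (d : ℕ) : u.delta (d + 1) <:+: (node c l).delta d := by
  obtain ⟨l₁, l₂, rfl⟩ := List.mem_iff_append.1 h
  rw [delta_node_append_cons]
  exact ⟨(c, d) :: deltaList l₁ d, deltaList l₂ d, by simp⟩

theorem mseq_infix_of_mem {c : S} {l : List (ℕ × OTree S)} {m : ℕ} {u : OTree S}
    (h : (m, u) ∈ l) : u.mseq <:+: (node c l).mseq := by
  obtain ⟨l₁, l₂, rfl⟩ := List.mem_iff_append.1 h
  rw [mseq_node_append_cons]
  exact ⟨mseqList l₁ ++ [m], mseqList l₂, by simp⟩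

theorem IsSubtree.delta_infix {s t : OTree S} (h : IsSubtree s t) (d : ℕ) :
    ∃ e, s.delta e <:+: t.delta d := by
  induction h generalizing d with
  | refl => exact ⟨d, List.infix_rfl⟩
  | child hmem _ ih =>
    obtain ⟨e, he⟩ := ih (d + 1)
    exact ⟨e, he.trans (delta_infix_of_mem hmem d)⟩

theorem IsSubtree.mseq_infix {s t : OTree S} (h : IsSubtree s t) : s.mseq <:+: t.mseq := by
  induction h with
  | refl => exact List.infix_rfl
  | child hmem _ ih => exact ih.trans (mseq_infix_of_mem hmem)

theorem RIso.refl : ∀ t : OTree S, RIso t t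
  | .node c l => .node c l l (Equiv.refl _) (fun _ => rfl) (fun i => RIso.refl (l.get i).2)
termination_by t => sizeOf t
decreasing_by
  have h₁ : sizeOf (l.get i) < sizeOf l := List.sizeOf_lt_of_mem (l.get_mem i)
  have h₂ : sizeOf (l.get i).2 < sizeOf (l.get i) := by
    rcases l.get i with ⟨m, t⟩
    simp
  simp only [node.sizeOf_spec]
  omega

theorem RIso.node_of_forall₂ (c : S) {l l' : List (ℕ × OTree S)}
    (h : List.Forall₂ (fun p q => p.1 = q.1 ∧ RIso p.2 q.2) l l') :
    RIso (OTree.node c l) (OTree.node c l') := by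
  obtain ⟨hlen, hget⟩ := List.forall₂_iff_get.1 h
  exact .node c l l' (finCongr hlen) (fun i => (hget i _ _).1) (fun i => (hget i _ _).2)

theorem RIso.node_append_cons (c : S) (l₁ l₂ : List (ℕ × OTree S)) (m : ℕ) {u u' : OTree S}
    (h : RIso u u') :
    RIso (OTree.node c (l₁ ++ (m, u) :: l₂)) (OTree.node c (l₁ ++ (m, u') :: l₂)) := by
  have hrefl : ∀ l : List (ℕ × OTree S),
      List.Forall₂ (fun p q => p.1 = q.1 ∧ RIso p.2 q.2) l l :=
    fun _ => List.forall₂_same.2 fun p _ => ⟨rfl, RIso.refl p.2⟩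
  exact RIso.node_of_forall₂ c (List.rel_append (hrefl l₁) (.cons ⟨rfl, h⟩ (hrefl l₂)))

theorem RIso.length_mseq_eq {t t' : OTree S} (h : RIso t t') :
    t.mseq.length = t'.mseq.length := by
  induction h with
  | node c l l' e _ _ ih =>
    simp only [mseq, mseqList_eq_flatten, List.length_flatten, List.map_map]
    rw [← Fin.sum_univ_fun_getElem, ← Fin.sum_univ_fun_getElem]
    exact Fintype.sum_equiv e _ _ fun i => by simpa using ih i

section Canonical

variable [LinearOrder S]

theorem sigLt_eq_prodLex :
    (sigLt : List (S × ℕ) × List ℕ → List (S × ℕ) × List ℕ → Prop) =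
      Prod.Lex (List.Lex (Prod.Lex (· < ·) (· < ·))) (List.Lex (· < ·)) := by
  funext a b
  exact propext Prod.lex_iff.symm

theorem sigLe_iff_not_sigLt {a b : List (S × ℕ) × List ℕ} : sigLe a b ↔ ¬ sigLt b a := by
  rw [sigLe, sigLt_eq_prodLex]
  refine ⟨?_, fun h => or_iff_not_imp_right.2 fun h' => Std.Trichotomous.trichotomous a b h' h⟩
  rintro (rfl | h) h'
  · exact irrefl _ h'
  · exact asymm h h'

theorem isCanonical_iff {τ : OTree S} :
    IsCanonical τ ↔ ∀ τ', RIso τ' τ → ¬ sigLt (sigOf τ) (sigOf τ') := by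
  simp only [IsCanonical, sigLe_iff_not_sigLt]

theorem deltaLt_shiftk (k : ℕ) {a b : List (S × ℕ)} (h : deltaLt a b) :
    deltaLt (shiftk k a) (shiftk k b) :=
  h.map fun x y hxy => by rw [Prod.lex_iff] at hxy ⊢; simpa using hxy

theorem sigLt_node_append_cons (c : S) (l₁ l₂ : List (ℕ × OTree S)) (m : ℕ)
    {u u' : OTree S} (hlen : u.mseq.length = u'.mseq.length) (h : sigLt (sigOf u) (sigOf u')) :
    sigLt (sigOf (node c (l₁ ++ (m, u) :: l₂))) (sigOf (node c (l₁ ++ (m, u') :: l₂))) := by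
  simp only [sigLt, sigOf, delta_node_append_cons, mseq_node_append_cons] at h ⊢
  rw [delta_eq_shiftk u 1, delta_eq_shiftk u' 1]
  rcases h with h | ⟨heq, h⟩
  · refine .inl (.cons (List.Lex.append_left _
      (.append_of_length_eq ?_ (deltaLt_shiftk 1 h) _ _) _))
    simp [shiftk, length_delta, hlen]
  · refine .inr ⟨by rw [heq], List.Lex.append_left _ (.append_of_length_eq ?_ (.cons h) _ _) _⟩
    simp [hlen]

theorem IsCanonical.of_mem {c : S} {l : List (ℕ × OTree S)} {m : ℕ} {u : OTree S}
    (hc : IsCanonical (node c l)) (h : (m, u) ∈ l) : IsCanonical u := by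
  rw [isCanonical_iff] at hc ⊢
  intro u' hiso hlt
  obtain ⟨l₁, l₂, rfl⟩ := List.mem_iff_append.1 h
  exact hc _ (RIso.node_append_cons c l₁ l₂ m hiso)
    (sigLt_node_append_cons c l₁ l₂ m hiso.length_mseq_eq.symm hlt)

theorem IsCanonical.of_isSubtree {s t : OTree S} (h : IsSubtree s t) (hc : IsCanonical t) :
    IsCanonical s := by
  induction h with
  | refl => exact hc
  | child hmem _ ih => exact ih (hc.of_mem hmem)

end Canonical

end OTree

/-- In the canonical left-heavy ordered form τ, the sequences δ(τ_v) and M(τ_v)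
of any subtree occur (after the appropriate depth shift) as contiguous
subsequences of δ(τ) and M(τ), and the subtree is itself canonical. -/
theorem canonical_subtree_infix {S : Type} [LinearOrder S] (τ : OTree S)
    (hc : OTree.IsCanonical τ) (s : OTree S) (hs : OTree.IsSubtree s τ) :
    (∃ d : ℕ, (OTree.shiftk d (s.delta 0)) <:+: (τ.delta 0)) ∧
    (s.mseq <:+: τ.mseq) ∧ OTree.IsCanonical s := by
  obtain ⟨d, hd⟩ := hs.delta_infix 0
  exact ⟨⟨d, OTree.delta_eq_shiftk s d ▸ hd⟩, hs.mseq_infix, hc.of_isSubtree hs⟩
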